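/- Let A and A' be unital C*-algebras with quasi-local structures over ℤ, let B ⊆ A be a quasi-local subalgebra satisfying weak relative Haag duality with constant S ≥ 0, and let α : A → A' be a *-isomorphism with spread at most R. Set B' := α(B), a quasi-local subalgebra of A' with B'_J := B' ∩ A'_J. Then Z_{A'}(B'_{I^c}) ⊆ A'_{I^{+(2R+S)}} for every finite interval I; in particular B' ⊆ A' satisfies weak relative Haag duality. -/
import Mathlib


open Set

noncomputable section

/-- A (possibly empty) finite interval in `ℤ`. -/
def IsFinInterval (I : Set ℤ) : Prop := ∃ a b : ℤ, I = Set.Icc a b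

/-- `I^{+R}`, the `R`-fattening of a subset of `ℤ`. -/
def fatten (R : ℕ) (I : Set ℤ) : Set ℤ := {x : ℤ | ∃ y ∈ I, |x - y| ≤ (R : ℤ)}

/-- A quasi-local structure over `ℤ` on a unital C*-algebra `A`:  an assignment of a closed
unital *-subalgebra `net I` to each finite interval `I ⊆ ℤ` satisfying the axioms in the text
(the value of `net` on sets which are not finite intervals is irrelevant). -/
structure QuasiLocalStructure (A : Type*) [CStarAlgebra A] where
  net : Set ℤ → StarSubalgebra ℂ A
  isClosed_net : ∀ I : Set ℤ, IsFinInterval I → IsClosed ((net I : Set A))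
  net_empty : ∀ x ∈ net (∅ : Set ℤ), ∃ z : ℂ, x = algebraMap ℂ A z
  isotony : ∀ I J : Set ℤ, IsFinInterval I → IsFinInterval J → I ⊆ J → net I ≤ net J
  locality : ∀ I J : Set ℤ, IsFinInterval I → IsFinInterval J → I ∩ J = ∅ →
    ∀ a ∈ net I, ∀ b ∈ net J, a * b = b * a
  dense_union : Dense (⋃ I ∈ {I : Set ℤ | IsFinInterval I}, (net I : Set A))

variable {A : Type*} [CStarAlgebra A]

/-- `A_F`: the smallest closed subalgebra of `A` containing `A_I` for every finite interval
`I ⊆ F`. -/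
def QuasiLocalStructure.algebraOf (Q : QuasiLocalStructure A) (F : Set ℤ) :
    StarSubalgebra ℂ A :=
  (StarAlgebra.adjoin ℂ
    (⋃ I ∈ {I : Set ℤ | IsFinInterval I ∧ I ⊆ F}, (Q.net I : Set A))).topologicalClosure

/-- `B_F` for a subalgebra `B ⊆ A` (given by its carrier set): the smallest closed subalgebra
of `A` containing `B_I = B ∩ A_I` for every finite interval `I ⊆ F`. -/
def QuasiLocalStructure.relAlgebraOf (Q : QuasiLocalStructure A) (B : Set A) (F : Set ℤ) :
    StarSubalgebra ℂ A :=
  (StarAlgebra.adjoin ℂ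
    (⋃ I ∈ {I : Set ℤ | IsFinInterval I ∧ I ⊆ F}, (B ∩ (Q.net I : Set A)))).topologicalClosure

/-- `B` is a quasi-local subalgebra of `A`: a closed unital *-subalgebra in which the union of
the `B_I = B ∩ A_I` over all finite intervals is norm-dense. -/
structure IsQuasiLocalSubalgebra (Q : QuasiLocalStructure A) (B : StarSubalgebra ℂ A) : Prop where
  isClosed : IsClosed (B : Set A)
  dense_union : closure (⋃ I ∈ {I : Set ℤ | IsFinInterval I},
      ((B : Set A) ∩ (Q.net I : Set A))) = (B : Set A)

/-- Weak Haag duality with constant `S`: `Z_A(A_{Iᶜ}) ⊆ A_{I^{+S}}` for all finite intervals. -/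
def WeakHaagDuality (Q : QuasiLocalStructure A) (S : ℕ) : Prop :=
  ∀ I : Set ℤ, IsFinInterval I →
    Set.centralizer ((Q.algebraOf Iᶜ : Set A)) ⊆ (Q.net (fatten S I) : Set A)

/-- Weak relative Haag duality with constant `R`: `Z_A(B_{Iᶜ}) ⊆ A_{I^{+R}}`. -/
def WeakRelativeHaagDuality (Q : QuasiLocalStructure A) (B : StarSubalgebra ℂ A) (R : ℕ) :
    Prop :=
  ∀ I : Set ℤ, IsFinInterval I →
    Set.centralizer ((Q.relAlgebraOf (B : Set A) Iᶜ : Set A)) ⊆ (Q.net (fatten R I) : Set A)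

/-- A *-isomorphism `α : A → A'` has spread at most `R` if `α(A_I) ⊆ A'_{I^{+R}}` for every
finite interval `I`. -/
def HasSpread {A' : Type*} [CStarAlgebra A']
    (Q : QuasiLocalStructure A) (Q' : QuasiLocalStructure A') (α : A ≃⋆ₐ[ℂ] A') (R : ℕ) :
    Prop :=
  ∀ I : Set ℤ, IsFinInterval I → ∀ a ∈ Q.net I, α a ∈ Q'.net (fatten R I)


lemma isClosed_setCentralizer {M : Type*} [Mul M] [TopologicalSpace M] [T2Space M]
    [ContinuousMul M] (s : Set M) : IsClosed (Set.centralizer s) := by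
  have h : Set.centralizer s = ⋂ m ∈ s, {a | m * a = a * m} := by
    ext a; simp [Set.mem_centralizer_iff]
  rw [h]
  exact isClosed_biInter fun m _ =>
    isClosed_eq (continuous_const.mul continuous_id) (continuous_id.mul continuous_const)

lemma isFinInterval_fatten (R : ℕ) {I : Set ℤ} (h : IsFinInterval I) :
    IsFinInterval (fatten R I) := by
  obtain ⟨a, b, rfl⟩ := h
  by_cases hab : a ≤ b
  · refine ⟨a - R, b + R, ?_⟩
    ext x
    simp only [fatten, Set.mem_setOf_eq, Set.mem_Icc]
    constructor
    · rintro ⟨y, ⟨hy1, hy2⟩, hxy⟩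
      rw [abs_le] at hxy; omega
    · rintro ⟨h1, h2⟩
      rcases le_total x a with h | h
      · exact ⟨a, ⟨le_refl _, hab⟩, by rw [abs_le]; omega⟩
      · rcases le_total x b with h' | h'
        · exact ⟨x, ⟨h, h'⟩, by simp⟩
        · exact ⟨b, ⟨hab, le_refl _⟩, by rw [abs_le]; omega⟩
  · refine ⟨1, 0, ?_⟩
    have he : Set.Icc a b = (∅ : Set ℤ) := Set.Icc_eq_empty (by omega)
    rw [he]
    ext x
    simp only [fatten, Set.mem_setOf_eq, Set.mem_Icc, Set.mem_empty_iff_false]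
    constructor
    · rintro ⟨y, hy, -⟩; exact hy.elim
    · rintro ⟨h1, h2⟩; omega

lemma fatten_fatten (R₁ R₂ : ℕ) (I : Set ℤ) :
    fatten R₂ (fatten R₁ I) ⊆ fatten (R₁ + R₂) I := by
  rintro x ⟨y, ⟨z, hz, hyz⟩, hxy⟩
  refine ⟨z, hz, ?_⟩
  have := abs_sub_le x y z
  push_cast
  linarith

lemma fatten_subset_compl {R : ℕ} {I K : Set ℤ} (h : K ⊆ (fatten R I)ᶜ) :
    fatten R K ⊆ Iᶜ := by
  rintro x ⟨y, hy, hxy⟩ hx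
  exact h hy ⟨x, hx, by rw [abs_sub_comm]; exact hxy⟩

lemma mem_relAlgebraOf {A : Type*} [CStarAlgebra A] (Q : QuasiLocalStructure A) (B : Set A)
    {F K : Set ℤ} (hK : IsFinInterval K) (hKF : K ⊆ F) {b : A}
    (hb : b ∈ B ∩ (Q.net K : Set A)) : b ∈ Q.relAlgebraOf B F :=
  StarSubalgebra.le_topologicalClosure _
    (StarAlgebra.subset_adjoin ℂ _ (Set.mem_biUnion ⟨hK, hKF⟩ hb))

/-- If `B ⊆ A` is a quasi-local subalgebra satisfying weak relative Haag
duality with constant `S` and `α : A → A'` is a *-isomorphism with spread at most `R`, then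
`B' := α(B)` satisfies `Z_{A'}(B'_{Iᶜ}) ⊆ A'_{I^{+(2R+S)}}` for every finite interval `I`;
in particular `B' ⊆ A'` satisfies weak relative Haag duality. -/
theorem image_weakRelativeHaagDuality {A A' : Type*} [CStarAlgebra A] [CStarAlgebra A']
    (Q : QuasiLocalStructure A) (Q' : QuasiLocalStructure A')
    (B : StarSubalgebra ℂ A) (hB : IsQuasiLocalSubalgebra Q B)
    (S : ℕ) (hHaag : WeakRelativeHaagDuality Q B S)
    (α : A ≃⋆ₐ[ℂ] A') (R : ℕ) (hspread : HasSpread Q Q' α R) :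
    ∀ I : Set ℤ, IsFinInterval I →
      Set.centralizer ((Q'.relAlgebraOf (α '' (B : Set A)) Iᶜ : Set A')) ⊆
        (Q'.net (fatten (2 * R + S) I) : Set A') := by
  intro I hI c' hc'
  set c : A := α.symm c' with hcdef
  have hIc : IsFinInterval (fatten R I) := isFinInterval_fatten R hI
  -- Step 1: B_{(I^{+R})ᶜ} is contained in the centralizer of {c}
  have key : Q.relAlgebraOf (B : Set A) (fatten R I)ᶜ ≤ StarSubalgebra.centralizer ℂ {c} := by
    apply StarSubalgebra.topologicalClosure_minimal
    · apply StarAlgebra.adjoin_le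
      rintro b hb
      simp only [Set.mem_iUnion, exists_prop, Set.mem_setOf_eq] at hb
      obtain ⟨K, ⟨hKfin, hKsub⟩, hbB, hbK⟩ := hb
      have comm : ∀ x, x ∈ (B : Set A) → x ∈ (Q.net K : Set A) → x * c = c * x := by
        intro x hxB hxK
        have hx' : α x ∈ (α '' (B : Set A)) ∩ (Q'.net (fatten R K) : Set A') :=
          ⟨Set.mem_image_of_mem _ hxB, hspread K hKfin x hxK⟩
        have hmem : α x ∈ Q'.relAlgebraOf (α '' (B : Set A)) Iᶜ :=
          mem_relAlgebraOf Q' _ (isFinInterval_fatten R hKfin)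
            (fatten_subset_compl hKsub) hx'
        have hcomm' : α x * c' = c' * α x := hc' (α x) hmem
        apply α.injective
        rw [map_mul, map_mul]
        show α x * α c = α c * α x
        rw [hcdef, StarAlgEquiv.apply_symm_apply]
        exact hcomm'
      rw [SetLike.mem_coe, StarSubalgebra.mem_centralizer_iff]
      rintro g hg
      rw [Set.mem_singleton_iff] at hg
      subst hg
      constructor
      · exact (comm b hbB hbK).symm
      · have h2 := comm (star b) (star_mem hbB) (star_mem hbK)
        calc star c * b = star (star b * c) := by simp [star_mul]
          _ = star (c * star b) := by rw [h2]
          _ = b * star c := by simp [star_mul]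
    · rw [StarSubalgebra.coe_centralizer]
      exact isClosed_setCentralizer _
  -- Step 2: c centralizes B_{(I^{+R})ᶜ}, apply relative Haag duality
  have hc_cent : c ∈ Set.centralizer ((Q.relAlgebraOf (B : Set A) (fatten R I)ᶜ : Set A)) := by
    intro m hm
    have hm' := key hm
    rw [StarSubalgebra.mem_centralizer_iff] at hm'
    exact ((hm' c (Set.mem_singleton c)).1).symm
  have hcS : c ∈ (Q.net (fatten S (fatten R I)) : Set A) := hHaag (fatten R I) hIc hc_cent
  -- Step 3: push forward via the spread bound and isotony
  have hfin2 : IsFinInterval (fatten S (fatten R I)) := isFinInterval_fatten S hIc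
  have hspr := hspread _ hfin2 c hcS
  have hac : α c = c' := α.apply_symm_apply c'
  rw [hac] at hspr
  have hsub : fatten R (fatten S (fatten R I)) ⊆ fatten (2 * R + S) I := by
    intro x hx
    have h1 := fatten_fatten S R (fatten R I) hx
    have h2 := fatten_fatten R (S + R) I h1
    have he : R + (S + R) = 2 * R + S := by ring
    rwa [he] at h2
  exact Q'.isotony _ _ (isFinInterval_fatten R hfin2) (isFinInterval_fatten _ hI) hsub hspr

end
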